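/- Let d ≥ 1 be an integer and let g : {−1,1}^n → {−1,1} be a Boolean function of d-degree. Then for every S ⊆ [n], the Fourier–Walsh coefficient ĝ(S) is an integer multiple of 1/2^{d−1}; consequently, at most 2^{2d−2} of the coefficients ĝ(S) are non-zero. -/

import Mathlib

open Finset MeasureTheory
open scoped BigOperators Classical

/-- Expectation over the uniform measure on the hypercube `{-1,1}^n` (coded by `Bool`). -/
noncomputable def expectation {n : ℕ} (f : (Fin n → Bool) → ℝ) : ℝ :=
  (∑ x : Fin n → Bool, f x) / 2 ^ n

/-- Probability of an event under the uniform measure on the hypercube. -/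
noncomputable def pr {n : ℕ} (P : (Fin n → Bool) → Prop) : ℝ :=
  expectation (fun x => if P x then (1 : ℝ) else 0)

/-- Walsh function `χ_S`. -/
noncomputable def walsh {n : ℕ} (S : Finset (Fin n)) (x : Fin n → Bool) : ℝ :=
  ∏ j ∈ S, (if x j then (1 : ℝ) else -1)

/-- Fourier--Walsh coefficient `f̂(S)`. -/
noncomputable def fwCoeff {n : ℕ} (f : (Fin n → Bool) → ℝ) (S : Finset (Fin n)) : ℝ :=
  expectation (fun x => f x * walsh S x)

/-- T-influence `Inf_S(f) = ∑_{T ⊇ S} f̂(T)^2`. -/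
noncomputable def TInf {n : ℕ} (f : (Fin n → Bool) → ℝ) (S : Finset (Fin n)) : ℝ :=
  ∑ T ∈ Finset.univ.filter (fun T : Finset (Fin n) => S ⊆ T), fwCoeff f T ^ 2

/-- Fourier weight at degrees `≥ d`. -/
noncomputable def Wge {n : ℕ} (d : ℕ) (f : (Fin n → Bool) → ℝ) : ℝ :=
  ∑ T ∈ Finset.univ.filter (fun T : Finset (Fin n) => d ≤ T.card), fwCoeff f T ^ 2

/-- Flip coordinate `i`. -/
def flipBit {n : ℕ} (y : Fin n → Bool) (i : Fin n) : Fin n → Bool :=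
  Function.update y i (!(y i))

/-- `i` is `S`-pivotal for `f` on input `x`. -/
def pivotal {n : ℕ} (f : (Fin n → Bool) → ℝ) (S : Finset (Fin n)) (i : Fin n)
    (x : Fin n → Bool) : Prop :=
  ∃ y : Fin n → Bool, (∀ j, j ∉ S → y j = x j) ∧ f y ≠ f (flipBit y i)

/-- Joint influence `JInf_S(f)`. -/
noncomputable def JInf {n : ℕ} (f : (Fin n → Bool) → ℝ) (S : Finset (Fin n)) : ℝ :=
  pr (fun x => ∀ i ∈ S, pivotal f S i x)

/-- Single-bit discrete partial derivative. -/
noncomputable def deriv1 {n : ℕ} (i : Fin n) (f : (Fin n → Bool) → ℝ) :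
    (Fin n → Bool) → ℝ :=
  fun x => (f (Function.update x i true) - f (Function.update x i false)) / 2

/-- Multi-bit discrete partial derivative `∂_S f`. -/
noncomputable def derivS {n : ℕ} (S : Finset (Fin n)) (f : (Fin n → Bool) → ℝ) :
    (Fin n → Bool) → ℝ :=
  S.toList.foldr deriv1 f

/-- Heat semigroup `P_t`. -/
noncomputable def heat {n : ℕ} (t : ℝ) (g : (Fin n → Bool) → ℝ) : (Fin n → Bool) → ℝ :=
  fun x => ∑ S : Finset (Fin n), Real.exp (-(S.card : ℝ) * t) * fwCoeff g S * walsh S x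

/-- Squared `L²` norm. -/
noncomputable def norm2sq {n : ℕ} (g : (Fin n → Bool) → ℝ) : ℝ :=
  expectation (fun x => g x ^ 2)

/-- Total influence. -/
noncomputable def totinf {n : ℕ} (f : (Fin n → Bool) → ℝ) : ℝ :=
  ∑ i : Fin n, TInf f {i}


variable {n : ℕ}

lemma walsh_flip {S : Finset (Fin n)} {j : Fin n} (hj : j ∈ S) (x : Fin n → Bool) :
    walsh S (Function.update x j (!(x j))) = - walsh S x := by
  unfold walsh
  rw [← Finset.insert_erase hj, Finset.prod_insert (Finset.notMem_erase _ _),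
      Finset.prod_insert (Finset.notMem_erase _ _), Function.update_self]
  rw [Finset.prod_congr rfl (fun k hk => by
    rw [Function.update_of_ne (Finset.ne_of_mem_erase hk)] :
      ∀ k ∈ S.erase j, (if Function.update x j (!(x j)) k then (1:ℝ) else -1) = (if x k then 1 else -1))]
  cases hxj : x j <;> simp

lemma sum_walsh_zero {S : Finset (Fin n)} (hS : S ≠ ∅) :
    ∑ x : Fin n → Bool, walsh S x = 0 := by
  obtain ⟨j, hj⟩ := Finset.nonempty_iff_ne_empty.2 hS
  have hinv : Function.Involutive (fun x : Fin n → Bool => Function.update x j (!(x j))) := by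
    intro x; funext k
    by_cases hk : k = j
    · subst hk; simp
    · simp [Function.update_of_ne hk]
  have h1 : ∑ x : Fin n → Bool, walsh S (Function.update x j (!(x j)))
      = ∑ x : Fin n → Bool, walsh S x :=
    Fintype.sum_equiv hinv.toPerm _ _ (fun x => rfl)
  have h2 : ∑ x : Fin n → Bool, walsh S (Function.update x j (!(x j)))
      = - ∑ x : Fin n → Bool, walsh S x := by
    rw [← Finset.sum_neg_distrib]
    exact Finset.sum_congr rfl (fun x _ => walsh_flip hj x)
  have := h1.symm.trans h2
  linarith

lemma sum_walsh_mul (x y : Fin n → Bool) :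
    ∑ S : Finset (Fin n), walsh S x * walsh S y = if x = y then (2:ℝ)^n else 0 := by
  have key : ∑ S : Finset (Fin n), walsh S x * walsh S y
      = ∏ j : Fin n, ((if x j then (1:ℝ) else -1) * (if y j then 1 else -1) + 1) := by
    rw [Finset.prod_add]
    rw [← Finset.powerset_univ]
    apply Finset.sum_congr rfl
    intro S _
    rw [Finset.prod_const_one, mul_one, walsh, walsh, ← Finset.prod_mul_distrib]
  rw [key]
  by_cases hxy : x = y
  · subst hxy
    rw [if_pos rfl]
    rw [Finset.prod_congr rfl (fun j _ => by cases hx : x j <;> norm_num :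
      ∀ j ∈ Finset.univ, ((if x j then (1:ℝ) else -1) * (if x j then 1 else -1) + 1) = 2)]
    simp
  · rw [if_neg hxy]
    obtain ⟨j, hjne⟩ : ∃ j, x j ≠ y j := by
      by_contra h
      push_neg at h
      exact hxy (funext h)
    apply Finset.prod_eq_zero (Finset.mem_univ j)
    cases hx : x j <;> cases hy : y j <;> simp_all

lemma two_pow_ne : ((2:ℝ)^n) ≠ 0 := by positivity

lemma fourier_inversion (f : (Fin n → Bool) → ℝ) (x : Fin n → Bool) :
    f x = ∑ S : Finset (Fin n), fwCoeff f S * walsh S x := by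
  unfold fwCoeff expectation
  have key : (∑ S : Finset (Fin n), (∑ y : Fin n → Bool, f y * walsh S y) / 2^n * walsh S x)
      = ∑ y : Fin n → Bool, f y * (if y = x then (2:ℝ)^n else 0) / 2^n := by
    calc (∑ S : Finset (Fin n), (∑ y : Fin n → Bool, f y * walsh S y) / 2^n * walsh S x)
        = ∑ S : Finset (Fin n), ∑ y : Fin n → Bool, f y * (walsh S y * walsh S x) / 2^n := by
          refine Finset.sum_congr rfl fun S _ => ?_
          rw [div_mul_eq_mul_div, Finset.sum_mul, Finset.sum_div]
          exact Finset.sum_congr rfl fun y _ => by ring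
      _ = ∑ y : Fin n → Bool, ∑ S : Finset (Fin n), f y * (walsh S y * walsh S x) / 2^n :=
          Finset.sum_comm
      _ = ∑ y : Fin n → Bool, f y * (if y = x then (2:ℝ)^n else 0) / 2^n := by
          refine Finset.sum_congr rfl fun y _ => ?_
          rw [← Finset.sum_div, ← Finset.mul_sum, sum_walsh_mul]
  rw [key]
  simp only [mul_ite, mul_zero, ite_div, zero_div]
  rw [Finset.sum_ite_eq' Finset.univ x (fun y => f y * 2^n / 2^n)]
  simp [mul_div_assoc, div_self (two_pow_ne (n := n))]

lemma parseval (f : (Fin n → Bool) → ℝ) :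
    ∑ S : Finset (Fin n), fwCoeff f S ^ 2 = expectation (fun x => f x ^ 2) := by
  unfold expectation
  calc ∑ S : Finset (Fin n), fwCoeff f S ^ 2
      = ∑ S : Finset (Fin n), fwCoeff f S * ((∑ x : Fin n → Bool, f x * walsh S x) / 2^n) := by
        refine Finset.sum_congr rfl fun S _ => ?_
        rw [sq]; rfl
    _ = ∑ S : Finset (Fin n), ∑ x : Fin n → Bool, (fwCoeff f S * walsh S x) * f x / 2^n := by
        refine Finset.sum_congr rfl fun S _ => ?_
        rw [← mul_div_assoc, Finset.mul_sum, Finset.sum_div]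
        exact Finset.sum_congr rfl fun x _ => by ring
    _ = ∑ x : Fin n → Bool, ∑ S : Finset (Fin n), (fwCoeff f S * walsh S x) * f x / 2^n :=
        Finset.sum_comm
    _ = (∑ x : Fin n → Bool, f x ^ 2) / 2^n := by
        rw [Finset.sum_div]
        refine Finset.sum_congr rfl fun x _ => ?_
        rw [← Finset.sum_div, ← Finset.sum_mul, ← fourier_inversion, sq]

lemma fwCoeff_walsh_empty (f : (Fin n → Bool) → ℝ) (S : Finset (Fin n)) (hS : S ≠ ∅)
    (hf : ∀ x, f x = 1) : fwCoeff f S = 0 := by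
  unfold fwCoeff expectation
  rw [show (∑ x : Fin n → Bool, f x * walsh S x) = ∑ x : Fin n → Bool, walsh S x from
    Finset.sum_congr rfl (fun x _ => by rw [hf x, one_mul])]
  rw [sum_walsh_zero hS, zero_div]

/-- The point of the cube corresponding to a set `A` (coordinates in `A` are `-1`). -/
def pt {n : ℕ} (A : Finset (Fin n)) : Fin n → Bool := fun j => if j ∈ A then false else true

lemma walsh_pt (S A : Finset (Fin n)) :
    walsh S (pt A) = ∏ j ∈ A, (if j ∈ S then (-1:ℝ) else 1) := by
  unfold walsh pt
  rw [show (∏ j ∈ S, (if (if j ∈ A then false else true) then (1:ℝ) else -1))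
      = ∏ j ∈ S, (if j ∈ A then (-1:ℝ) else 1) from
    Finset.prod_congr rfl (fun j _ => by by_cases h : j ∈ A <;> simp [h])]
  rw [Finset.prod_ite_mem S A (fun _ => (-1:ℝ)), Finset.prod_ite_mem A S (fun _ => (-1:ℝ)),
    Finset.inter_comm]

lemma innerAltSum (S T : Finset (Fin n)) :
    ∑ A ∈ T.powerset, (-1:ℝ)^(T.card - A.card) * walsh S (pt A)
      = if T ⊆ S then (-2:ℝ)^T.card else 0 := by
  have hterm : ∀ A ∈ T.powerset, (-1:ℝ)^(T.card - A.card) * walsh S (pt A)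
      = (∏ j ∈ A, (if j ∈ S then (-1:ℝ) else 1)) * ∏ _j ∈ T \ A, (-1:ℝ) := by
    intro A hA
    rw [Finset.mem_powerset] at hA
    rw [walsh_pt, Finset.prod_const, Finset.card_sdiff_of_subset hA, mul_comm]
  rw [Finset.sum_congr rfl hterm, ← Finset.prod_add]
  by_cases hTS : T ⊆ S
  · rw [if_pos hTS]
    rw [Finset.prod_congr rfl (fun j hj => by rw [if_pos (hTS hj)]; norm_num :
      ∀ j ∈ T, ((if j ∈ S then (-1:ℝ) else 1) + -1) = -2)]
    rw [Finset.prod_const]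
  · rw [if_neg hTS]
    obtain ⟨j, hjT, hjS⟩ := Finset.not_subset.1 hTS
    exact Finset.prod_eq_zero hjT (by rw [if_neg hjS]; norm_num)

noncomputable def hfun {n : ℕ} (g : (Fin n → Bool) → ℝ) : (Fin n → Bool) → ℝ :=
  fun x => (1 - g x) / 2

noncomputable def HZ {n : ℕ} (g : (Fin n → Bool) → ℝ) (A : Finset (Fin n)) : ℤ :=
  if g (pt A) = 1 then 0 else 1

noncomputable def mob {n : ℕ} (g : (Fin n → Bool) → ℝ) (T : Finset (Fin n)) : ℤ :=
  ∑ A ∈ T.powerset, (-1)^(T.card - A.card) * HZ g A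

lemma HZ_cast (g : (Fin n → Bool) → ℝ) (hg : ∀ x, g x = 1 ∨ g x = -1) (A : Finset (Fin n)) :
    ((HZ g A : ℤ) : ℝ) = hfun g (pt A) := by
  unfold HZ hfun
  rcases hg (pt A) with h | h <;> rw [h] <;> norm_num

lemma mob_eq (g : (Fin n → Bool) → ℝ) (hg : ∀ x, g x = 1 ∨ g x = -1) (T : Finset (Fin n)) :
    ((mob g T : ℤ) : ℝ) = (-2:ℝ)^T.card *
      ∑ S ∈ Finset.univ.filter (fun S : Finset (Fin n) => T ⊆ S), fwCoeff (hfun g) S := by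
  unfold mob
  push_cast
  calc ∑ A ∈ T.powerset, (-1:ℝ)^(T.card - A.card) * ((HZ g A : ℤ) : ℝ)
      = ∑ A ∈ T.powerset, (-1:ℝ)^(T.card - A.card) *
          ∑ S : Finset (Fin n), fwCoeff (hfun g) S * walsh S (pt A) := by
        refine Finset.sum_congr rfl fun A _ => ?_
        rw [HZ_cast g hg, fourier_inversion (hfun g) (pt A)]
    _ = ∑ A ∈ T.powerset, ∑ S : Finset (Fin n),
          fwCoeff (hfun g) S * ((-1:ℝ)^(T.card - A.card) * walsh S (pt A)) := by
        refine Finset.sum_congr rfl fun A _ => ?_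
        rw [Finset.mul_sum]
        exact Finset.sum_congr rfl fun S _ => by ring
    _ = ∑ S : Finset (Fin n), fwCoeff (hfun g) S *
          ∑ A ∈ T.powerset, (-1:ℝ)^(T.card - A.card) * walsh S (pt A) := by
        rw [Finset.sum_comm]
        exact Finset.sum_congr rfl fun S _ => (Finset.mul_sum _ _ _).symm
    _ = ∑ S : Finset (Fin n), fwCoeff (hfun g) S * (if T ⊆ S then (-2:ℝ)^T.card else 0) := by
        exact Finset.sum_congr rfl fun S _ => by rw [innerAltSum]
    _ = (-2:ℝ)^T.card * ∑ S ∈ Finset.univ.filter (fun S : Finset (Fin n) => T ⊆ S),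
          fwCoeff (hfun g) S := by
        rw [Finset.mul_sum, Finset.sum_filter]
        exact Finset.sum_congr rfl fun S _ => by
          by_cases h : T ⊆ S <;> simp [h, mul_comm]

lemma alt_sum (S S' : Finset (Fin n)) :
    ∑ T ∈ Finset.univ.filter (fun T : Finset (Fin n) => S ⊆ T ∧ T ⊆ S'), (-1:ℝ)^T.card
      = if S = S' then (-1:ℝ)^S.card else 0 := by
  by_cases hSS' : S ⊆ S'
  · have key : ∑ T ∈ Finset.univ.filter (fun T : Finset (Fin n) => S ⊆ T ∧ T ⊆ S'), (-1:ℝ)^T.card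
        = ∑ C ∈ (S' \ S).powerset, (-1:ℝ)^(S.card + C.card) := by
      refine Finset.sum_nbij' (fun T => T \ S) (fun C => S ∪ C) ?_ ?_ ?_ ?_ ?_
      · intro T hT
        rw [Finset.mem_filter] at hT
        exact Finset.mem_powerset.2 (Finset.sdiff_subset_sdiff hT.2.2 le_rfl)
      · intro C hC
        rw [Finset.mem_powerset] at hC
        refine Finset.mem_filter.2 ⟨Finset.mem_univ _, Finset.subset_union_left,
          Finset.union_subset hSS' (hC.trans Finset.sdiff_subset)⟩
      · intro T hT
        rw [Finset.mem_filter] at hT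
        exact Finset.union_sdiff_of_subset hT.2.1
      · intro C hC
        rw [Finset.mem_powerset] at hC
        have hdisj : Disjoint S C :=
          Finset.disjoint_left.2 fun a haS haC => (Finset.mem_sdiff.1 (hC haC)).2 haS
        show (S ∪ C) \ S = C
        rw [Finset.union_sdiff_cancel_left hdisj]
      · intro T hT
        rw [Finset.mem_filter] at hT
        rw [← Finset.card_sdiff_add_card_eq_card hT.2.1, add_comm]
    rw [key]
    have : ∑ C ∈ (S' \ S).powerset, (-1:ℝ)^(S.card + C.card)
        = (-1:ℝ)^S.card * ∑ C ∈ (S' \ S).powerset, (-1:ℝ)^C.card := by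
      rw [Finset.mul_sum]
      exact Finset.sum_congr rfl fun C _ => (pow_add _ _ _)
    rw [this]
    have hz : ∑ C ∈ (S' \ S).powerset, (-1:ℝ)^C.card
        = if S' \ S = ∅ then 1 else 0 := by
      have := Finset.sum_powerset_neg_one_pow_card (x := S' \ S)
      exact_mod_cast congrArg (Int.cast : ℤ → ℝ) this
    rw [hz]
    by_cases h : S = S'
    · subst h; simp
    · have : S' \ S ≠ ∅ := by
        rw [Ne, Finset.sdiff_eq_empty_iff_subset]
        intro h2
        exact h (Finset.Subset.antisymm hSS' h2)
      rw [if_neg this, if_neg h, mul_zero]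
  · have h1 : S ≠ S' := fun h => hSS' (h ▸ le_rfl)
    rw [if_neg h1]
    apply Finset.sum_eq_zero
    intro T hT
    rw [Finset.mem_filter] at hT
    exact absurd (hT.2.1.trans hT.2.2) hSS'

lemma fwCoeff_hfun_eq (g : (Fin n → Bool) → ℝ) (hg : ∀ x, g x = 1 ∨ g x = -1)
    (S : Finset (Fin n)) :
    fwCoeff (hfun g) S = (-1:ℝ)^S.card *
      ∑ T ∈ Finset.univ.filter (fun T : Finset (Fin n) => S ⊆ T),
        ((mob g T : ℤ) : ℝ) / 2^T.card := by
  have step1 : ∀ T : Finset (Fin n), ((mob g T : ℤ) : ℝ) / 2^T.card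
      = (-1:ℝ)^T.card * ∑ S' ∈ Finset.univ.filter (fun S' : Finset (Fin n) => T ⊆ S'),
          fwCoeff (hfun g) S' := by
    intro T
    rw [mob_eq g hg T, show ((-2:ℝ)^T.card) = (-1:ℝ)^T.card * 2^T.card by
      rw [← mul_pow]; norm_num]
    field_simp
  symm
  calc (-1:ℝ)^S.card * ∑ T ∈ Finset.univ.filter (fun T : Finset (Fin n) => S ⊆ T),
        ((mob g T : ℤ) : ℝ) / 2^T.card
      = (-1:ℝ)^S.card * ∑ T : Finset (Fin n), ∑ S' : Finset (Fin n),
          (if S ⊆ T ∧ T ⊆ S' then (-1:ℝ)^T.card * fwCoeff (hfun g) S' else 0) := by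
        rw [Finset.sum_filter]
        congr 1
        refine Finset.sum_congr rfl fun T _ => ?_
        by_cases h : S ⊆ T
        · rw [if_pos h, step1, Finset.mul_sum, Finset.sum_filter]
          refine Finset.sum_congr rfl fun S' _ => ?_
          by_cases h2 : T ⊆ S' <;> simp [h, h2]
        · rw [if_neg h]
          exact (Finset.sum_eq_zero fun S' _ => by simp [h]).symm
    _ = (-1:ℝ)^S.card * ∑ S' : Finset (Fin n), ∑ T : Finset (Fin n),
          (if S ⊆ T ∧ T ⊆ S' then (-1:ℝ)^T.card * fwCoeff (hfun g) S' else 0) := by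
        rw [Finset.sum_comm]
    _ = (-1:ℝ)^S.card * ∑ S' : Finset (Fin n),
          (if S = S' then (-1:ℝ)^S.card else 0) * fwCoeff (hfun g) S' := by
        congr 1
        refine Finset.sum_congr rfl fun S' _ => ?_
        rw [← alt_sum S S', Finset.sum_filter, Finset.sum_mul]
        refine Finset.sum_congr rfl fun T _ => ?_
        by_cases h : S ⊆ T ∧ T ⊆ S' <;> simp [h]
    _ = fwCoeff (hfun g) S := by
        simp only [ite_mul, zero_mul]
        rw [Finset.sum_ite_eq Finset.univ S (fun S' => (-1:ℝ)^S.card * fwCoeff (hfun g) S')]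
        rw [if_pos (Finset.mem_univ S), ← mul_assoc, ← pow_add]
        rw [Even.neg_one_pow ⟨S.card, rfl⟩, one_mul]

lemma fwCoeff_hfun_vanish (d : ℕ) (g : (Fin n → Bool) → ℝ)
    (hdeg : ∀ S : Finset (Fin n), d < S.card → fwCoeff g S = 0) (hd : 1 ≤ d)
    (S : Finset (Fin n)) (hS : d < S.card) : fwCoeff (hfun g) S = 0 := by
  have hSne : S ≠ ∅ := by
    intro h
    rw [h, Finset.card_empty] at hS
    omega
  have h2 : ∑ x : Fin n → Bool, g x * walsh S x = 0 := by
    have := hdeg S hS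
    unfold fwCoeff expectation at this
    exact (div_eq_zero_iff.1 this).resolve_right (two_pow_ne (n := n))
  unfold fwCoeff expectation hfun
  rw [show (∑ x : Fin n → Bool, (1 - g x)/2 * walsh S x)
      = (∑ x : Fin n → Bool, walsh S x)/2 - (∑ x : Fin n → Bool, g x * walsh S x)/2 from by
    rw [Finset.sum_div, Finset.sum_div, ← Finset.sum_sub_distrib]
    exact Finset.sum_congr rfl fun x _ => by ring]
  rw [sum_walsh_zero hSne, h2]
  norm_num

lemma mob_zero (d : ℕ) (g : (Fin n → Bool) → ℝ) (hg : ∀ x, g x = 1 ∨ g x = -1)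
    (hdeg : ∀ S : Finset (Fin n), d < S.card → fwCoeff g S = 0) (hd : 1 ≤ d)
    (T : Finset (Fin n)) (hT : d < T.card) : mob g T = 0 := by
  have h := mob_eq g hg T
  rw [Finset.sum_eq_zero (fun S hS => by
    rw [Finset.mem_filter] at hS
    exact fwCoeff_hfun_vanish d g hdeg hd S
      (lt_of_lt_of_le hT (Finset.card_le_card hS.2)))] at h
  rw [mul_zero] at h
  exact_mod_cast h

lemma sum_walsh_eq (S : Finset (Fin n)) :
    ∑ x : Fin n → Bool, walsh S x = if S = ∅ then (2:ℝ)^n else 0 := by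
  by_cases h : S = ∅
  · subst h
    simp [walsh, Finset.card_univ]
  · rw [sum_walsh_zero h, if_neg h]

lemma fwCoeff_g_decomp (g : (Fin n → Bool) → ℝ) (S : Finset (Fin n)) :
    fwCoeff g S = (if S = ∅ then (1:ℝ) else 0) - 2 * fwCoeff (hfun g) S := by
  unfold fwCoeff expectation hfun
  rw [show (∑ x : Fin n → Bool, g x * walsh S x)
      = (∑ x : Fin n → Bool, walsh S x) - 2 * ∑ x : Fin n → Bool, (1 - g x)/2 * walsh S x from by
    rw [Finset.mul_sum, ← Finset.sum_sub_distrib]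
    exact Finset.sum_congr rfl fun x _ => by ring]
  rw [sum_walsh_eq, sub_div, mul_div_assoc]
  congr 1
  by_cases h : S = ∅ <;> simp [h, div_self (two_pow_ne (n := n))]

lemma granularity (d : ℕ) (hd : 1 ≤ d) (g : (Fin n → Bool) → ℝ)
    (hg : ∀ x, g x = 1 ∨ g x = -1)
    (hdeg : ∀ S : Finset (Fin n), d < S.card → fwCoeff g S = 0) (S : Finset (Fin n)) :
    ∃ m : ℤ, fwCoeff g S = (m : ℝ) / 2^(d-1) := by
  obtain ⟨e, rfl⟩ : ∃ e, d = e + 1 := ⟨d - 1, by omega⟩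
  simp only [Nat.add_sub_cancel]
  set F := Finset.univ.filter (fun T : Finset (Fin n) => S ⊆ T ∧ T.card ≤ e + 1) with hF
  refine ⟨(if S = ∅ then 2^e else 0)
      - (-1)^S.card * ∑ T ∈ F, mob g T * 2^(e+1-T.card), ?_⟩
  have hrestrict : ∑ T ∈ Finset.univ.filter (fun T : Finset (Fin n) => S ⊆ T),
      ((mob g T : ℤ):ℝ)/2^T.card = ∑ T ∈ F, ((mob g T : ℤ):ℝ)/2^T.card := by
    symm
    apply Finset.sum_subset
    · intro T hT
      rw [hF, Finset.mem_filter] at hT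
      exact Finset.mem_filter.2 ⟨Finset.mem_univ _, hT.2.1⟩
    · intro T hT hTF
      have hcard : e + 1 < T.card := by
        rw [Finset.mem_filter] at hT
        rw [hF, Finset.mem_filter] at hTF
        push_neg at hTF
        exact hTF (Finset.mem_univ _) hT.2
      rw [mob_zero (e+1) g hg hdeg hd T hcard]
      simp
  rw [fwCoeff_g_decomp, fwCoeff_hfun_eq g hg, hrestrict]
  have hterm : ∀ T ∈ F, ((mob g T:ℤ):ℝ) * 2^(e+1-T.card) / 2^e
      = 2 * (((mob g T:ℤ):ℝ)/2^T.card) := by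
    intro T hT
    rw [hF, Finset.mem_filter] at hT
    have h2 : ((2:ℝ))^(e+1-T.card) = 2^(e+1)/2^T.card := by
      rw [eq_div_iff (two_pow_ne (n := T.card)), ← pow_add]
      congr 1
      omega
    rw [h2, pow_succ]
    field_simp
  push_cast
  rw [sub_div]
  have h1 : ((if S = ∅ then ((2:ℝ))^e else 0)) / 2^e = (if S = ∅ then (1:ℝ) else 0) := by
    by_cases h : S = ∅ <;> simp [h, div_self (two_pow_ne (n := e))]
  have h2 : ((-1:ℝ)^S.card * ∑ T ∈ F, ((mob g T:ℤ):ℝ) * 2^(e+1-T.card)) / 2^e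
      = (-1:ℝ)^S.card * (2 * ∑ T ∈ F, ((mob g T:ℤ):ℝ)/2^T.card) := by
    rw [mul_div_assoc, Finset.sum_div, Finset.sum_congr rfl hterm, ← Finset.mul_sum]
  rw [h1, h2]
  ring

theorem statement16' (n d : ℕ) (hd : 1 ≤ d) (g : (Fin n → Bool) → ℝ)
    (hg : ∀ x, g x = 1 ∨ g x = -1)
    (hdeg : ∀ S : Finset (Fin n), d < S.card → fwCoeff g S = 0) :
    (∀ S : Finset (Fin n), ∃ m : ℤ, fwCoeff g S = m / 2 ^ (d - 1)) ∧
    (Finset.univ.filter (fun S : Finset (Fin n) => fwCoeff g S ≠ 0)).card ≤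
      2 ^ (2 * d - 2) := by
  have hgran : ∀ S : Finset (Fin n), ∃ m : ℤ, fwCoeff g S = (m:ℝ) / 2^(d-1) :=
    granularity d hd g hg hdeg
  refine ⟨hgran, ?_⟩
  have hpar : ∑ S : Finset (Fin n), fwCoeff g S ^ 2 = 1 := by
    rw [parseval]
    unfold expectation
    rw [Finset.sum_congr rfl (fun x _ => by rcases hg x with h|h <;> rw [h] <;> norm_num :
      ∀ x ∈ Finset.univ, g x ^ 2 = (1:ℝ))]
    rw [Finset.sum_const, Finset.card_univ]
    simp [div_self (two_pow_ne (n := n))]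
  set N := Finset.univ.filter (fun S : Finset (Fin n) => fwCoeff g S ≠ 0) with hN
  have hlow : ∀ S ∈ N, (1:ℝ)/4^(d-1) ≤ fwCoeff g S ^ 2 := by
    intro S hS
    rw [hN, Finset.mem_filter] at hS
    obtain ⟨m, hm⟩ := hgran S
    have hm0 : m ≠ 0 := by
      intro h
      rw [h] at hm
      simp at hm
      exact hS.2 hm
    have h1 : (1:ℝ) ≤ (m:ℝ)^2 := by
      have h2 : (1:ℤ) ≤ m^2 := by nlinarith [Int.one_le_abs hm0, sq_abs m]
      exact_mod_cast h2
    rw [hm, div_pow]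
    rw [show ((2:ℝ)^(d-1))^2 = 4^(d-1) from by
      rw [← pow_mul, mul_comm, pow_mul]; norm_num]
    gcongr
  have hsum : (N.card : ℝ) * (1/4^(d-1)) ≤ 1 := by
    calc (N.card : ℝ) * (1/4^(d-1)) ≤ ∑ S ∈ N, fwCoeff g S ^ 2 := by
          have := Finset.card_nsmul_le_sum N _ _ hlow
          simpa [nsmul_eq_mul] using this
      _ ≤ ∑ S : Finset (Fin n), fwCoeff g S ^ 2 :=
          Finset.sum_le_sum_of_subset_of_nonneg (Finset.filter_subset _ _)
            (fun S _ _ => sq_nonneg _)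
      _ = 1 := hpar
  have hcard : (N.card : ℝ) ≤ 4^(d-1) := by
    have h4 : (0:ℝ) < 4^(d-1) := by positivity
    calc (N.card:ℝ) = ((N.card:ℝ) * (1/4^(d-1))) * 4^(d-1) := by field_simp
      _ ≤ 1 * 4^(d-1) := mul_le_mul_of_nonneg_right hsum (le_of_lt h4)
      _ = 4^(d-1) := one_mul _
  have hfin : N.card ≤ 4^(d-1) := by exact_mod_cast hcard
  calc N.card ≤ 4^(d-1) := hfin
    _ = 2^(2*d-2) := by
      rw [show (4:ℕ) = 2^2 from rfl, ← pow_mul]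
      congr 1
      omega


/-- the Fourier--Walsh coefficients of a `d`-degree Boolean function
lie in `ℤ / 2^{d-1}`, and at most `2^{2d-2}` of them are non-zero. -/
theorem statement16 (n d : ℕ) (hd : 1 ≤ d) (g : (Fin n → Bool) → ℝ)
    (hg : ∀ x, g x = 1 ∨ g x = -1)
    (hdeg : ∀ S : Finset (Fin n), d < S.card → fwCoeff g S = 0) :
    (∀ S : Finset (Fin n), ∃ m : ℤ, fwCoeff g S = m / 2 ^ (d - 1)) ∧
    (Finset.univ.filter (fun S : Finset (Fin n) => fwCoeff g S ≠ 0)).card ≤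
      2 ^ (2 * d - 2) := by
  exact statement16' n d hd g hg hdeg
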